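/- arXiv:1711.02491 — 7 statements merged into one kernel-verified Lean document; each statement's English description precedes it below -/
import Mathlib

section
/- Let ℓ be an odd positive integer and let k be a positive integer with k < φ^ℓ. Then (k·F_ℓ, k·F_{ℓ+1}) is a Hofstadter G pair, i.e., G(k·F_{ℓ+1}) = k·F_ℓ. -/
/-!
For odd `ℓ`, Binet's formula gives `F_{ℓ+1} = φ F_ℓ - φ^{-ℓ}`, hence
`k F_{ℓ+1} + 1 = φ · k F_ℓ + (1 - k φ^{-ℓ})`. The hypothesis `k < φ^ℓ` puts the remainder
`1 - k φ^{-ℓ}` in `[0, φ)`, so dividing by `φ` and taking the floor leaves exactly `k F_ℓ`.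
-/

noncomputable def goldenphi : ℝ := (1 + Real.sqrt 5) / 2

noncomputable def hofG (x : ℕ) : ℕ := (⌊((x : ℝ) + 1) / goldenphi⌋).toNat

open Real
open scoped goldenRatio

theorem goldenphi_eq_goldenRatio : goldenphi = φ := rfl

theorem hofG_eq_of_le_of_lt {x m : ℕ} (hlo : m * φ ≤ x + 1)
    (hhi : (x + 1 : ℝ) < (m + 1) * φ) : hofG x = m := by
  have hfloor : ⌊((x : ℝ) + 1) / φ⌋ = m := by
    rw [Int.floor_eq_iff, le_div_iff₀ goldenRatio_pos, div_lt_iff₀ goldenRatio_pos]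
    push_cast
    exact ⟨hlo, hhi⟩
  rw [hofG, goldenphi_eq_goldenRatio, hfloor, Int.toNat_natCast]

theorem goldenConj_pow_of_odd {n : ℕ} (hn : Odd n) : ψ ^ n = -(φ ^ n)⁻¹ := by
  rw [← inv_pow, inv_goldenRatio, hn.neg_pow, neg_neg]

theorem fib_succ_eq_goldenRatio_mul_fib_sub_of_odd {n : ℕ} (hn : Odd n) :
    (Nat.fib (n + 1) : ℝ) = φ * Nat.fib n - (φ ^ n)⁻¹ := by
  have hbinet := fib_succ_sub_goldenRatio_mul_fib n
  rw [goldenConj_pow_of_odd hn] at hbinet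
  linarith

theorem stmt_0_general (ℓ k : ℕ) (hℓodd : Odd ℓ)
    (hk : (k : ℝ) < goldenphi ^ ℓ) :
    hofG (k * Nat.fib (ℓ + 1)) = k * Nat.fib ℓ := by
  rw [goldenphi_eq_goldenRatio] at hk
  have hpow : 0 < φ ^ ℓ := pow_pos goldenRatio_pos ℓ
  have hr_nonneg : 0 ≤ (k : ℝ) / φ ^ ℓ := by positivity
  have hr_lt_one : (k : ℝ) / φ ^ ℓ < 1 := (div_lt_one hpow).mpr hk
  have hsplit : ((k * Nat.fib (ℓ + 1) : ℕ) : ℝ) + 1 =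
      (k * Nat.fib ℓ : ℕ) * φ + (1 - k / φ ^ ℓ) := by
    push_cast
    rw [fib_succ_eq_goldenRatio_mul_fib_sub_of_odd hℓodd]
    field_simp
    ring
  apply hofG_eq_of_le_of_lt <;> rw [hsplit]
  · linarith
  · linarith [one_lt_goldenRatio]

theorem stmt_0 (ℓ k : ℕ) (hℓpos : 0 < ℓ) (hℓodd : Odd ℓ) (hkpos : 0 < k)
    (hk : (k : ℝ) < goldenphi ^ ℓ) :
    hofG (k * Nat.fib (ℓ + 1)) = k * Nat.fib ℓ :=
  stmt_0_general ℓ k hℓodd hk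
end

section
/- Let β = β_1…β_L be a bit string (each β_i ∈ {0,1}) and let v = Σ_{i=1}^L β_i F_{i+1}. Then G(v) = Σ_{i=1}^L β_i F_i. (Equivalently, with the down-shift β↓1 = β_2…β_L, one has G(v) = FibSum(β↓1) + β_1.) -/
noncomputable def psi : ℝ := (1 - Real.sqrt 5) / 2

lemma sqrt5_sq : Real.sqrt 5 ^ 2 = 5 := Real.sq_sqrt (by norm_num)

lemma sqrt5_gt : (2:ℝ) < Real.sqrt 5 := by
  nlinarith [sqrt5_sq, Real.sqrt_nonneg 5]

lemma sqrt5_lt : Real.sqrt 5 < 3 := by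
  nlinarith [sqrt5_sq, Real.sqrt_nonneg 5]

lemma psi_neg : psi < 0 := by unfold psi; nlinarith [sqrt5_gt]

lemma psi_gt : (-1:ℝ) < psi := by unfold psi; nlinarith [sqrt5_lt]

lemma psi_sq : psi ^ 2 = psi + 1 := by unfold psi; nlinarith [sqrt5_sq]

lemma phi_pos : (0:ℝ) < goldenphi := by unfold goldenphi; nlinarith [sqrt5_gt]

lemma phi_psi : goldenphi + psi = 1 := by unfold goldenphi psi; ring

lemma phi_sq : goldenphi ^ 2 = goldenphi + 1 := by
  unfold goldenphi; nlinarith [sqrt5_sq]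

lemma fib_phi (i : ℕ) : (Nat.fib (i+1) : ℝ) = goldenphi * Nat.fib i + psi ^ i := by
  induction i with
  | zero => simp
  | succ n ih =>
      have h : (Nat.fib (n+2) : ℝ) = (Nat.fib (n+1) : ℝ) + (Nat.fib n : ℝ) := by
        rw [Nat.fib_add_two]; push_cast; ring
      rw [h, ih]
      have h1 : goldenphi ^ 2 - goldenphi - 1 = 0 := by nlinarith [phi_sq]
      have h2 : goldenphi + psi - 1 = 0 := by nlinarith [phi_psi]
      linear_combination (-(Nat.fib n : ℝ)) * h1 - psi ^ n * h2

lemma sum_bounds (L : ℕ) (β : ℕ → ℕ) (hbit : ∀ i, β i = 0 ∨ β i = 1) :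
    -1 < ∑ i ∈ Finset.range L, (β (i+1) : ℝ) * psi ^ (i+1) ∧
    ∑ i ∈ Finset.range L, (β (i+1) : ℝ) * psi ^ (i+1) < -psi := by
  induction L generalizing β with
  | zero => simp; nlinarith [psi_neg]
  | succ n ih =>
      rw [Finset.sum_range_succ']
      have hfac : ∑ i ∈ Finset.range n, (β (i+1+1) : ℝ) * psi ^ (i+1+1)
          = psi * ∑ i ∈ Finset.range n, (β (i+2) : ℝ) * psi ^ (i+1) := by
        rw [Finset.mul_sum]
        apply Finset.sum_congr rfl
        intro i _
        ring
      rw [hfac]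
      obtain ⟨h1, h2⟩ := ih (fun n => β (n+1)) (fun i => hbit (i+1))
      set S := ∑ i ∈ Finset.range n, (β (i+2) : ℝ) * psi ^ (i+1) with hS
      have hS1 : -1 < S := h1
      have hS2 : S < -psi := h2
      have hp := psi_neg
      have hq := psi_sq
      rcases hbit 1 with h | h <;> rw [h] <;> push_cast <;> constructor <;>
        nlinarith [mul_pos (neg_pos.mpr hp) (by linarith : (0:ℝ) < S + 1),
          mul_pos (neg_pos.mpr hp) (by linarith : (0:ℝ) < -psi - S)]

theorem stmt_3 (L : ℕ) (β : ℕ → ℕ) (hbit : ∀ i, β i = 0 ∨ β i = 1)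
    (v : ℕ) (hv : v = ∑ i ∈ Finset.Icc 1 L, β i * Nat.fib (i + 1)) :
    hofG v = ∑ i ∈ Finset.Icc 1 L, β i * Nat.fib i := by
  set w : ℕ := ∑ i ∈ Finset.Icc 1 L, β i * Nat.fib i with hw
  set S : ℝ := ∑ i ∈ Finset.range L, (β (i+1) : ℝ) * psi ^ (i+1) with hSdef
  have hIcc : ∀ f : ℕ → ℕ, ∑ i ∈ Finset.Icc 1 L, f i = ∑ i ∈ Finset.range L, f (i+1) := by
    intro f
    rw [← Finset.Ico_add_one_right_eq_Icc, Finset.sum_Ico_eq_sum_range]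
    simp [add_comm]
  have hvR : (v : ℝ) = goldenphi * (w : ℝ) + S := by
    rw [hv, hw, hIcc, hIcc]
    push_cast
    rw [Finset.mul_sum, ← Finset.sum_add_distrib]
    apply Finset.sum_congr rfl
    intro i _
    rw [show i + 1 + 1 = (i+1) + 1 from rfl, fib_phi (i+1)]
    ring
  obtain ⟨hb1, hb2⟩ := sum_bounds L β hbit
  rw [← hSdef] at hb1 hb2
  have hfloor : ⌊((v : ℝ) + 1) / goldenphi⌋ = (w : ℤ) := by
    rw [Int.floor_eq_iff]
    have hp := phi_pos
    have hps := phi_psi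
    constructor
    · rw [le_div_iff₀ hp]
      push_cast
      nlinarith
    · rw [div_lt_iff₀ hp]
      push_cast
      nlinarith
  rw [hofG, hfloor]
  simp
end

section
/- Let β = β_1…β_ℓ be a bit string (each β_i ∈ {0,1}). Define the backward recurrence u_{ℓ+1} = v_{ℓ+1} = 0 and, for i = ℓ down to 1, u_i = v_{i+1} + β_i and v_i = u_{i+1} + v_{i+1} + β_i. Then for every i with 1 ≤ i ≤ ℓ+1, v_i = Σ_{j=i}^{ℓ} β_j F_{j−i+2} and u_i = G(v_i); in particular, v_1 = Σ_{j=1}^{ℓ} β_j F_{j+1} and u_1 = G(v_1), so the recurrence (the exponent trace of Algorithm HGPExp) produces the Hofstadter G pair (G(v), v) for v = FibSum(β). -/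
lemma one_lt_phi : 1 < goldenphi := by
  have h : (2:ℝ) < Real.sqrt 5 := by
    nlinarith [Real.sq_sqrt (show (0:ℝ) ≤ 5 by norm_num), Real.sqrt_nonneg 5]
  unfold goldenphi; linarith

lemma hofG_eq (u v : ℕ) (h1 : -1 < (v:ℝ) - u * goldenphi)
    (h2 : (v:ℝ) - u * goldenphi < goldenphi - 1) : hofG v = u := by
  have hphi := one_lt_phi
  have hfloor : ⌊((v:ℝ) + 1) / goldenphi⌋ = (u:ℤ) := by
    rw [Int.floor_eq_iff]
    constructor
    · rw [le_div_iff₀ (by linarith)]; push_cast; linarith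
    · rw [div_lt_iff₀ (by linarith)]; push_cast; linarith
  unfold hofG; rw [hfloor]; simp

lemma sum_shift (β : ℕ → ℕ) (i ℓ c : ℕ) :
    ∑ j ∈ Finset.Icc i ℓ, β j * Nat.fib (j - i + c)
      = ∑ k ∈ Finset.range (ℓ + 1 - i), β (i + k) * Nat.fib (k + c) := by
  rw [← Finset.Ico_add_one_right_eq_Icc, Finset.sum_Ico_eq_sum_range]
  simp

theorem stmt_5 (ℓ : ℕ) (β : ℕ → ℕ) (hbit : ∀ i, β i = 0 ∨ β i = 1)
    (u v : ℕ → ℕ)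
    (hu_init : u (ℓ + 1) = 0) (hv_init : v (ℓ + 1) = 0)
    (hu_rec : ∀ i, 1 ≤ i → i ≤ ℓ → u i = v (i + 1) + β i)
    (hv_rec : ∀ i, 1 ≤ i → i ≤ ℓ → v i = u (i + 1) + v (i + 1) + β i) :
    ∀ i, 1 ≤ i → i ≤ ℓ + 1 →
      v i = ∑ j ∈ Finset.Icc i ℓ, β j * Nat.fib (j - i + 2) ∧ u i = hofG (v i) := by
  have hphi := one_lt_phi
  have hsq := phi_sq
  have key : ∀ k, k ≤ ℓ →
      u (ℓ + 1 - k) = (∑ m ∈ Finset.range k, β (ℓ + 1 - k + m) * Nat.fib (m + 1)) ∧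
      v (ℓ + 1 - k) = (∑ m ∈ Finset.range k, β (ℓ + 1 - k + m) * Nat.fib (m + 2)) ∧
      -1 < (v (ℓ + 1 - k) : ℝ) - u (ℓ + 1 - k) * goldenphi ∧
      (v (ℓ + 1 - k) : ℝ) - u (ℓ + 1 - k) * goldenphi < goldenphi - 1 := by
    intro k
    induction k with
    | zero =>
      intro _
      simp [hu_init, hv_init]
      linarith
    | succ k ih =>
      intro hk
      obtain ⟨ihu, ihv, ihl, ihr⟩ := ih (by omega)
      set i := ℓ + 1 - (k + 1) with hidef
      have hi1 : 1 ≤ i := by omega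
      have hile : i ≤ ℓ := by omega
      have hidx : ℓ + 1 - k = i + 1 := by omega
      rw [hidx] at ihu ihv ihl ihr
      have hui := hu_rec i hi1 hile
      have hvi := hv_rec i hi1 hile
      have hs : ∀ c, (∑ m ∈ Finset.range (k + 1), β (i + m) * Nat.fib (m + c))
          = (∑ m ∈ Finset.range k, β (i + 1 + m) * Nat.fib (m + 1 + c)) + β i * Nat.fib c := by
        intro c
        rw [Finset.sum_range_succ']
        congr 1
        · apply Finset.sum_congr rfl
          intro m _
          have h1 : i + (m + 1) = i + 1 + m := by omega
          have h2 : m + 1 + c = m + 1 + c := rfl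
          rw [h1]
        · simp
      have hu' : u i = ∑ m ∈ Finset.range (k + 1), β (i + m) * Nat.fib (m + 1) := by
        rw [hs 1, hui, ihv]
        simp [Nat.fib_one]
      have hv' : v i = ∑ m ∈ Finset.range (k + 1), β (i + m) * Nat.fib (m + 2) := by
        rw [hs 2, hvi, ihu, ihv, ← Finset.sum_add_distrib]
        have : ∀ m ∈ Finset.range k,
            β (i + 1 + m) * Nat.fib (m + 1) + β (i + 1 + m) * Nat.fib (m + 2)
            = β (i + 1 + m) * Nat.fib (m + 1 + 2) := by
          intro m _
          conv_rhs => rw [Nat.fib_add_two]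
          ring
        rw [Finset.sum_congr rfl this]
        simp [Nat.fib_two]
      refine ⟨hu', hv', ?_, ?_⟩ <;>
      · rcases hbit i with hb | hb <;>
        · rw [hui, hvi, hb]
          push_cast
          nlinarith [ihl, ihr, hsq, hphi]
  intro i h1 h2
  have h := key (ℓ + 1 - i) (by omega)
  rw [show ℓ + 1 - (ℓ + 1 - i) = i by omega] at h
  obtain ⟨hu, hv, hl, hr⟩ := h
  constructor
  · rw [sum_shift β i ℓ 2]
    exact hv
  · rw [hofG_eq (u i) (v i) hl hr]
end

section
/- Let r be a positive integer and let γ be a real number with 0 ≤ γ < 1. If r < φ^h for some positive integer h, then there exists an integer w with 0 ≤ w ≤ F_{h+2} − 1 such that the fractional part of (w/φ − γ) lies strictly between 0 and 1/r (equivalently, the fractional part of w·φ^{−1} lies in the open modular interval (γ : γ + 1/r) taken modulo 1). -/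
lemma gp_facts : 1 < goldenphi ∧ goldenphi < 2 ∧ goldenphi ^ 2 = goldenphi + 1 := by
  have h5 : Real.sqrt 5 ^ 2 = 5 := Real.sq_sqrt (by norm_num)
  have h0 : 0 ≤ Real.sqrt 5 := Real.sqrt_nonneg 5
  unfold goldenphi
  refine ⟨by nlinarith, by nlinarith, by nlinarith⟩

lemma gp_pos : 0 < goldenphi := lt_trans one_pos gp_facts.1

lemma gp_inv : goldenphi⁻¹ = goldenphi - 1 := by
  have h := gp_facts.2.2
  have hp := gp_pos
  field_simp
  nlinarith

lemma apow (n : ℕ) : goldenphi⁻¹ ^ (n + 2) = goldenphi⁻¹ ^ n - goldenphi⁻¹ ^ (n + 1) := by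
  have h := gp_facts.2.2
  have hp := gp_pos
  have ha : goldenphi⁻¹ ^ 2 = 1 - goldenphi⁻¹ := by
    rw [gp_inv]; nlinarith
  calc goldenphi⁻¹ ^ (n + 2) = goldenphi⁻¹ ^ n * goldenphi⁻¹ ^ 2 := by ring
    _ = goldenphi⁻¹ ^ n - goldenphi⁻¹ ^ (n+1) := by rw [ha]; ring

lemma key : ∀ n : ℕ, (Nat.fib (n+1) : ℝ) * goldenphi - Nat.fib (n+2) = (-1)^n * goldenphi⁻¹ ^ (n+1) := by
  intro n
  induction n using Nat.twoStepInduction with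
  | zero => simp [gp_inv]
  | one =>
    simp only [Nat.fib_add_two]
    push_cast
    rw [gp_inv]
    have h := gp_facts.2.2
    ring_nf
    nlinarith [gp_pos]
  | more n ih1 ih2 =>
    have hfib : (Nat.fib (n+3) : ℝ) = Nat.fib (n+2) + Nat.fib (n+1) := by
      rw [Nat.fib_add_two]; push_cast; ring
    have hfib2 : (Nat.fib (n+4) : ℝ) = Nat.fib (n+3) + Nat.fib (n+2) := by
      rw [Nat.fib_add_two]; push_cast; ring
    have ha := apow (n+1)
    calc (Nat.fib (n+3) : ℝ) * goldenphi - Nat.fib (n+4)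
        = ((Nat.fib (n+2):ℝ) * goldenphi - Nat.fib (n+3)) + ((Nat.fib (n+1):ℝ) * goldenphi - Nat.fib (n+2)) := by
          rw [hfib2, hfib]; ring
      _ = (-1)^(n+1) * goldenphi⁻¹ ^ (n+2) + (-1)^n * goldenphi⁻¹ ^ (n+1) := by rw [ih2, ih1]
      _ = (-1)^(n+2) * goldenphi⁻¹ ^ (n+3) := by
          linear_combination (-(-1:ℝ)^n) * apow (n+1)

lemma fib_div_phi (n : ℕ) :
    (Nat.fib (n+1) : ℝ) / goldenphi = Nat.fib n + (-1)^n * goldenphi⁻¹ ^ (n+1) := by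
  have hp := gp_pos
  have hk := key n
  have hfib : (Nat.fib (n+2) : ℝ) = Nat.fib (n+1) + Nat.fib n := by
    rw [Nat.fib_add_two]; push_cast; ring
  rw [gp_inv] at hk
  rw [div_eq_mul_inv, gp_inv]
  linear_combination hk + hfib

lemma fract_shift (w n : ℕ) (x : ℝ) :
    Int.fract (((w + Nat.fib (n+1) : ℕ) : ℝ) / goldenphi - x)
      = Int.fract ((w : ℝ) / goldenphi - x + (-1)^n * goldenphi⁻¹ ^ (n+1)) := by
  rw [Int.fract_eq_fract]
  refine ⟨Nat.fib n, ?_⟩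
  push_cast
  rw [add_div, fib_div_phi]
  ring

lemma gp_inv_pos : 0 < goldenphi⁻¹ := inv_pos.mpr gp_pos

lemma gp_inv_lt_one : goldenphi⁻¹ < 1 := by
  rw [inv_lt_one_iff₀]; right; exact gp_facts.1

lemma two_gp_inv : 1 < 2 * goldenphi⁻¹ := by
  have h2 := gp_facts.2.1
  have hp := gp_pos
  have : goldenphi⁻¹ * goldenphi = 1 := inv_mul_cancel₀ (ne_of_gt hp)
  nlinarith

lemma fract_down (y : ℝ) (h0 : 1 ≤ y) (h1 : y < 2) : Int.fract y = y - 1 := by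
  calc Int.fract y = Int.fract (y - (1:ℤ)) := (Int.fract_sub_intCast _ _).symm
    _ = y - 1 := by
        push_cast
        exact Int.fract_eq_self.mpr ⟨by linarith, by linarith⟩

lemma main_lemma : ∀ h : ℕ, 1 ≤ h → ∀ x : ℝ, ∃ w : ℕ, w < Nat.fib (h+2) ∧
    0 < Int.fract ((w:ℝ)/goldenphi - x) ∧ Int.fract ((w:ℝ)/goldenphi - x) ≤ goldenphi⁻¹ ^ h := by
  intro h hh
  induction h, hh using Nat.le_induction with
  | base =>
    intro x
    have ha0 := gp_inv_pos
    have ha1 := gp_inv_lt_one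
    have ha2 := two_gp_inv
    have hv0 : 0 ≤ Int.fract (-x) := Int.fract_nonneg _
    have hv1 : Int.fract (-x) < 1 := Int.fract_lt_one _
    have e1 : Int.fract (((1:ℕ):ℝ)/goldenphi - x) = Int.fract (goldenphi⁻¹ + Int.fract (-x)) := by
      rw [Int.fract_eq_fract]
      refine ⟨⌊-x⌋, ?_⟩
      push_cast
      rw [one_div]
      linear_combination Int.self_sub_fract (-x)
    by_cases hc : 0 < Int.fract (-x) ∧ Int.fract (-x) ≤ goldenphi⁻¹
    · refine ⟨0, by norm_num [Nat.fib], ?_, ?_⟩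
      · simpa using hc.1
      · rw [pow_one]; simpa using hc.2
    · push_neg at hc
      have key1 : 0 < Int.fract (goldenphi⁻¹ + Int.fract (-x)) ∧
          Int.fract (goldenphi⁻¹ + Int.fract (-x)) ≤ goldenphi⁻¹ := by
        rcases eq_or_lt_of_le hv0 with hv | hv
        · rw [← hv, add_zero, Int.fract_eq_self.mpr ⟨le_of_lt ha0, ha1⟩]
          exact ⟨ha0, le_refl _⟩
        · have hgt := hc hv
          rw [fract_down _ (by linarith) (by linarith)]
          constructor <;> linarith
      refine ⟨1, by norm_num [Nat.fib], ?_, ?_⟩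
      · rw [e1]; exact key1.1
      · rw [e1, pow_one]; exact key1.2
  | succ h hh ih =>
    intro x
    have ha0 := gp_inv_pos
    have ha1 := gp_inv_lt_one
    have hap : (0:ℝ) < goldenphi⁻¹ ^ (h+1) := pow_pos ha0 _
    have hap1 : goldenphi⁻¹ ^ (h+1) < 1 := pow_lt_one₀ (le_of_lt ha0) ha1 (by omega)
    have hdrop : goldenphi⁻¹ ^ (h+2) ≤ goldenphi⁻¹ ^ (h+1) := by
      rw [pow_succ]
      exact mul_le_of_le_one_right (le_of_lt (pow_pos ha0 _)) (le_of_lt ha1)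
    have happ := apow h
    have hfib3 : Nat.fib (h+1) + Nat.fib (h+2) = Nat.fib (h+1+2) := (Nat.fib_add_two).symm
    rcases Nat.even_or_odd h with he | ho
    · -- even case
      have hsign : ((-1:ℝ))^h = 1 := he.neg_one_pow
      obtain ⟨w, hw, hu0, hu1⟩ := ih (x - goldenphi⁻¹ ^ (h+1))
      have hveq : Int.fract ((w:ℝ)/goldenphi - (x - goldenphi⁻¹ ^ (h+1)))
          = Int.fract (Int.fract ((w:ℝ)/goldenphi - x) + goldenphi⁻¹ ^ (h+1)) := by
        rw [Int.fract_eq_fract]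
        exact ⟨⌊(w:ℝ)/goldenphi - x⌋, by linear_combination Int.self_sub_fract ((w:ℝ)/goldenphi - x)⟩
      rw [hveq] at hu0 hu1
      have hv0 : 0 ≤ Int.fract ((w:ℝ)/goldenphi - x) := Int.fract_nonneg _
      have hv1 : Int.fract ((w:ℝ)/goldenphi - x) < 1 := Int.fract_lt_one _
      by_cases hcase : 0 < Int.fract ((w:ℝ)/goldenphi - x) ∧
          Int.fract ((w:ℝ)/goldenphi - x) + goldenphi⁻¹ ^ (h+1) < 1
      · refine ⟨w, lt_of_lt_of_le hw (Nat.fib_mono (by omega)), hcase.1, ?_⟩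
        have hfr : Int.fract (Int.fract ((w:ℝ)/goldenphi - x) + goldenphi⁻¹ ^ (h+1))
            = Int.fract ((w:ℝ)/goldenphi - x) + goldenphi⁻¹ ^ (h+1) :=
          Int.fract_eq_self.mpr ⟨by linarith [hcase.1], hcase.2⟩
        rw [hfr] at hu1
        linarith
      · have hval : Int.fract (((w + Nat.fib (h+1) :ℕ):ℝ)/goldenphi - x)
            = Int.fract (Int.fract ((w:ℝ)/goldenphi - x) + goldenphi⁻¹ ^ (h+1)) := by
          rw [fract_shift, hsign, one_mul, Int.fract_eq_fract]
          exact ⟨⌊(w:ℝ)/goldenphi - x⌋, by linear_combination Int.self_sub_fract ((w:ℝ)/goldenphi - x)⟩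
        refine ⟨w + Nat.fib (h+1), by omega, ?_, ?_⟩
        · rw [hval]; exact hu0
        · rw [hval]
          rcases not_and_or.mp hcase with h1 | h1
          · have hveq0 : Int.fract ((w:ℝ)/goldenphi - x) = 0 :=
              le_antisymm (by simpa using h1) hv0
            rw [hveq0, zero_add]
            exact le_of_eq (Int.fract_eq_self.mpr ⟨le_of_lt hap, hap1⟩)
          · push_neg at h1
            rw [fract_down _ h1 (by linarith)]
            linarith
    · -- odd case
      have hsign : ((-1:ℝ))^h = -1 := ho.neg_one_pow
      obtain ⟨w, hw, ht0, ht1⟩ := ih x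
      by_cases hle : Int.fract ((w:ℝ)/goldenphi - x) ≤ goldenphi⁻¹ ^ (h+1)
      · exact ⟨w, lt_of_lt_of_le hw (Nat.fib_mono (by omega)), ht0, hle⟩
      · push_neg at hle
        have htlt : Int.fract ((w:ℝ)/goldenphi - x) < 1 := Int.fract_lt_one _
        have hval : Int.fract (((w + Nat.fib (h+1) :ℕ):ℝ)/goldenphi - x)
            = Int.fract ((w:ℝ)/goldenphi - x) - goldenphi⁻¹ ^ (h+1) := by
          rw [fract_shift, hsign]
          have e2 : Int.fract ((w:ℝ)/goldenphi - x + -1 * goldenphi⁻¹ ^ (h+1))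
              = Int.fract (Int.fract ((w:ℝ)/goldenphi - x) - goldenphi⁻¹ ^ (h+1)) := by
            rw [Int.fract_eq_fract]
            exact ⟨⌊(w:ℝ)/goldenphi - x⌋, by linear_combination Int.self_sub_fract ((w:ℝ)/goldenphi - x)⟩
          rw [e2]
          exact Int.fract_eq_self.mpr ⟨by linarith, by linarith⟩
        refine ⟨w + Nat.fib (h+1), by omega, ?_, ?_⟩
        · rw [hval]; linarith
        · rw [hval]; linarith

theorem stmt_6 (r h : ℕ) (hr : 0 < r) (hh : 0 < h) (γ : ℝ)
    (hγ0 : 0 ≤ γ) (hγ1 : γ < 1) (hrh : (r : ℝ) < goldenphi ^ h) :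
    ∃ w : ℕ, w ≤ Nat.fib (h + 2) - 1 ∧
      0 < Int.fract ((w : ℝ) / goldenphi - γ) ∧
      Int.fract ((w : ℝ) / goldenphi - γ) < 1 / r := by
  obtain ⟨w, hw, h0, h1⟩ := main_lemma h hh γ
  refine ⟨w, Nat.le_sub_one_of_lt hw, h0, ?_⟩
  have hr' : (0:ℝ) < r := by exact_mod_cast hr
  have hlt : 1 / goldenphi ^ h < 1 / (r:ℝ) := one_div_lt_one_div_of_lt hr' hrh
  calc Int.fract ((w : ℝ) / goldenphi - γ) ≤ goldenphi⁻¹ ^ h := h1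
    _ = 1 / goldenphi ^ h := by rw [inv_pow, one_div]
    _ < 1 / r := hlt
end

section
/- Let r and h be positive integers with r < φ^h, and let s, t be integers with 0 ≤ s ≤ r−1 and 0 ≤ t ≤ r−1. Then there exist nonnegative integers u and v such that u = G(v), u ≡ s (mod r), v ≡ t (mod r), and v ≤ F_{2h+2} − 2. -/
/-!
Since `G v = ⌊(v + 1) φ⁻¹⌋`, for `v = t + k r` we have `(v + 1) φ⁻¹ = (t + 1) φ⁻¹ + r (k φ⁻¹)`,
so `G v ≡ s (mod r)` as soon as `k φ⁻¹` lies, modulo `1`, in a suitable half-open interval of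
length `1 / r`. The numbers `F (n + 1) φ⁻¹` and `F (n + 2) φ⁻¹` differ from integers by errors
`-ψ ^ (n + 1)` and `-ψ ^ (n + 2)` of opposite signs whose difference has size `φ⁻¹ ^ n`; hence
consecutive visits of the rotation by `φ⁻¹` to an interval of length `φ⁻¹ ^ n` are at most
`F (n + 2)` apart, and some `k < F (h + 2)` works because `φ⁻¹ ^ h < 1 / r`.
For the bound on `v`, let `L = φ ^ h + ψ ^ h` be the `h`-th Lucas number: `r < φ ^ h` forces
`r ≤ L` (and `r < L` for even `h`), and `F (h + 2) L = F (2 h + 2) + (-1) ^ h`,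
so `v ≤ r F (h + 2) - 1 ≤ F (2 h + 2) - 2`.
-/

open Set Real
open scoped goldenRatio

def RotationHits (α y L : ℝ) (k : ℤ) : Prop := ∃ m : ℤ, k * α - m ∈ Ico y (y + L)

lemma add_mem_Ico_or_add_mem_Ico_of_nonneg_of_nonpos {x y a b : ℝ}
    (hx : x ∈ Ico y (y + (a - b))) (ha : 0 ≤ a) (hb : b ≤ 0) :
    x + a ∈ Ico y (y + (a - b)) ∨ x + b ∈ Ico y (y + (a - b)) := by
  by_cases h : x + a < y + (a - b)
  · exact .inl ⟨by linarith [hx.1], h⟩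
  · exact .inr ⟨by linarith, by linarith [hx.2]⟩

lemma add_mem_Ico_or_add_mem_Ico {x y L a b : ℝ} (hx : x ∈ Ico y (y + L)) (hab : a * b ≤ 0)
    (hL : |a - b| = L) : x + a ∈ Ico y (y + L) ∨ x + b ∈ Ico y (y + L) := by
  subst hL
  rcases mul_nonpos_iff.mp hab with ⟨ha, hb⟩ | ⟨ha, hb⟩
  · rw [abs_of_nonneg (by linarith)] at hx ⊢
    exact add_mem_Ico_or_add_mem_Ico_of_nonneg_of_nonpos hx ha hb
  · rw [abs_sub_comm, abs_of_nonneg (by linarith)] at hx ⊢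
    exact (add_mem_Ico_or_add_mem_Ico_of_nonneg_of_nonpos hx hb ha).symm

namespace RotationHits

variable {α y L : ℝ} {k p q m₁ m₂ : ℤ}

lemma add_or_add (hk : RotationHits α y L k) (hsign : (p * α - m₁) * (q * α - m₂) ≤ 0)
    (hL : |(p * α - m₁) - (q * α - m₂)| = L) :
    RotationHits α y L (k + p) ∨ RotationHits α y L (k + q) := by
  obtain ⟨m, hm⟩ := hk
  refine (add_mem_Ico_or_add_mem_Ico hm hsign hL).imp (fun h ↦ ⟨m + m₁, ?_⟩)
    (fun h ↦ ⟨m + m₂, ?_⟩) <;> convert h using 1 <;> push_cast <;> ring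

lemma sub_or_sub (hk : RotationHits α y L k) (hsign : (p * α - m₁) * (q * α - m₂) ≤ 0)
    (hL : |(p * α - m₁) - (q * α - m₂)| = L) :
    RotationHits α y L (k - p) ∨ RotationHits α y L (k - q) := by
  simp only [sub_eq_add_neg]
  refine hk.add_or_add (m₁ := -m₁) (m₂ := -m₂) ?_ ?_
  · push_cast; linarith
  · rw [← hL, ← abs_neg]; push_cast; ring_nf

lemma exists_of_abs_sub (hL : |(p * α - m₁) - (q * α - m₂)| = L) (hL0 : 0 < L) :
    ∃ k, RotationHits α y L k := by
  obtain ⟨c, n, hc⟩ : ∃ c n : ℤ, c * α - n = L := by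
    rcases abs_eq hL0.le |>.mp hL with h | h
    · exact ⟨p - q, m₁ - m₂, by push_cast; linarith⟩
    · exact ⟨q - p, m₂ - m₁, by push_cast; linarith⟩
  have hmul : ((⌈y / L⌉ * c : ℤ) : ℝ) * α - (⌈y / L⌉ * n : ℤ) = ⌈y / L⌉ * L := by
    push_cast; rw [← hc]; ring
  refine ⟨⌈y / L⌉ * c, ⌈y / L⌉ * n, ?_⟩
  rw [hmul]
  constructor
  · exact (div_le_iff₀ hL0).mp (Int.le_ceil _)
  · have := Int.ceil_lt_add_one (y / L)
    rw [← sub_lt_iff_lt_add, lt_div_iff₀ hL0] at this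
    linarith

lemma exists_nonneg (hp : 0 < p) (hq : 0 < q) (hsign : (p * α - m₁) * (q * α - m₂) ≤ 0)
    (hL : |(p * α - m₁) - (q * α - m₂)| = L) (hL0 : 0 < L) :
    ∃ k, 0 ≤ k ∧ RotationHits α y L k := by
  by_contra! hneg
  obtain ⟨g, hg, hmax⟩ := Int.exists_greatest_of_bdd
    ⟨0, fun k hk ↦ (not_le.mp fun h0 ↦ hneg k h0 hk).le⟩
    (exists_of_abs_sub hL hL0)
  rcases hg.add_or_add hsign hL with h | h
  · linarith [hmax _ h]
  · linarith [hmax _ h]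

lemma exists_nonneg_lt_max (hp : 0 < p) (hq : 0 < q)
    (hsign : (p * α - m₁) * (q * α - m₂) ≤ 0) (hL : |(p * α - m₁) - (q * α - m₂)| = L)
    (hL0 : 0 < L) : ∃ k, 0 ≤ k ∧ k < max p q ∧ RotationHits α y L k := by
  obtain ⟨ℓ, ⟨hℓ0, hℓ⟩, hmin⟩ := Int.exists_least_of_bdd ⟨0, fun k hk ↦ hk.1⟩
    (exists_nonneg hp hq hsign hL hL0)
  refine ⟨ℓ, hℓ0, lt_of_not_ge fun hge ↦ ?_, hℓ⟩
  rcases hℓ.sub_or_sub hsign hL with h | h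
  · linarith [hmin _ ⟨by linarith [le_max_left p q], h⟩]
  · linarith [hmin _ ⟨by linarith [le_max_right p q], h⟩]

end RotationHits

lemma RotationHits.exists_floor_eq {α L : ℝ} {r s t k : ℕ} (hr : 0 < r) (hrL : r * L ≤ 1)
    (hk : RotationHits α ((s - (t + 1) * α) / r) L k) :
    ∃ m : ℤ, ⌊((t + k * r : ℕ) + 1 : ℝ) * α⌋ = s + r * m := by
  obtain ⟨m, hlo, hhi⟩ := hk
  simp only [Int.cast_natCast] at hlo hhi
  set a := (s - (t + 1) * α) / r
  have ha : r * a = s - (t + 1) * α := mul_div_cancel₀ _ (by positivity)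
  have hsplit : ((t + k * r : ℕ) + 1 : ℝ) * α = s + r * m + r * (k * α - m - a) := by
    push_cast
    linear_combination ha
  refine ⟨m, Int.floor_eq_iff.mpr ?_⟩
  rw [hsplit]
  push_cast
  constructor
  · linarith [mul_nonneg (Nat.cast_nonneg r) (sub_nonneg.mpr hlo)]
  · have : (r : ℝ) * (k * α - m - a) < r * L :=
      mul_lt_mul_of_pos_left (by linarith) (by positivity)
    linarith

lemma fib_succ_mul_inv_goldenRatio_sub_fib (n : ℕ) :
    (Nat.fib (n + 1) : ℝ) * φ⁻¹ - Nat.fib n = -ψ ^ (n + 1) := by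
  rw [inv_goldenRatio, ← goldenConj_mul_fib_succ_add_fib]; ring

lemma exists_lt_fib_rotationHits_inv_goldenRatio (n : ℕ) (y : ℝ) :
    ∃ k : ℕ, k < Nat.fib (n + 2) ∧ RotationHits φ⁻¹ y (φ⁻¹ ^ n) k := by
  have hd₁ := fib_succ_mul_inv_goldenRatio_sub_fib n
  have hd₂ := fib_succ_mul_inv_goldenRatio_sub_fib (n + 1)
  have hmax : max (Nat.fib (n + 1) : ℤ) (Nat.fib (n + 2)) = Nat.fib (n + 2) :=
    max_eq_right (by exact_mod_cast Nat.fib_mono (by omega))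
  obtain ⟨k, hk0, hk, hhit⟩ := RotationHits.exists_nonneg_lt_max (y := y)
    (p := Nat.fib (n + 1)) (q := Nat.fib (n + 2)) (m₁ := Nat.fib n) (m₂ := Nat.fib (n + 1))
    (by exact_mod_cast Nat.fib_pos.mpr (by omega)) (by exact_mod_cast Nat.fib_pos.mpr (by omega))
    (by
      push_cast
      rw [hd₁, hd₂, neg_mul_neg, ← pow_add]
      exact (Odd.pow_neg ⟨n + 1, by ring⟩ goldenConj_neg).le)
    (by
      push_cast
      rw [hd₁, hd₂, show -ψ ^ (n + 1) - -ψ ^ (n + 1 + 1) = ψ ^ n * (ψ ^ 2 - ψ) by ring,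
        goldenConj_sq, add_sub_cancel_left, mul_one, abs_pow, abs_of_neg goldenConj_neg,
        inv_goldenRatio])
    (pow_pos (inv_pos.mpr goldenRatio_pos) n)
  lift k to ℕ using hk0
  exact ⟨k, by exact_mod_cast hmax ▸ hk, hhit⟩

lemma fib_add_two_add_fib (n : ℕ) :
    ((Nat.fib (n + 2) + Nat.fib n : ℕ) : ℝ) = φ ^ (n + 1) + ψ ^ (n + 1) := by
  rw [← goldenRatio_mul_fib_succ_add_fib, ← goldenConj_mul_fib_succ_add_fib, Nat.fib_add_two]
  push_cast
  linear_combination (Nat.fib (n + 1) : ℝ) * goldenRatio_add_goldenConj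

lemma fib_add_three_mul_fib_add_two_add_fib (n : ℕ) :
    ((Nat.fib (n + 3) * (Nat.fib (n + 2) + Nat.fib n) : ℕ) : ℝ) =
      Nat.fib (2 * n + 4) - (-1) ^ n := by
  have hprod : φ ^ (n + 1) * ψ ^ (n + 1) = (-1) ^ (n + 1) := by
    rw [← mul_pow, goldenRatio_mul_goldenConj]
  rw [Nat.cast_mul, fib_add_two_add_fib, coe_fib_eq, coe_fib_eq, div_mul_eq_mul_div,
    eq_sub_iff_add_eq, div_add' _ _ _ (by positivity), div_left_inj' (by positivity)]
  linear_combination (φ ^ 2 - ψ ^ 2) * hprod +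
    (-1) ^ (n + 1) * ((φ + ψ) * goldenRatio_sub_goldenConj + √5 * goldenRatio_add_goldenConj)

lemma abs_goldenConj_pow_lt_one {n : ℕ} (hn : n ≠ 0) : |ψ ^ n| < 1 := by
  rw [abs_pow]
  exact pow_lt_one₀ (abs_nonneg ψ)
    (abs_lt.mpr ⟨neg_one_lt_goldenConj, goldenConj_neg.trans one_pos⟩) hn

lemma mul_fib_add_two_add_one_le_fib {r h : ℕ} (hh : 0 < h) (hrh : (r : ℝ) < φ ^ h) :
    r * Nat.fib (h + 2) + 1 ≤ Nat.fib (2 * h + 2) := by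
  obtain ⟨n, rfl⟩ : ∃ n, h = n + 1 := ⟨h - 1, by omega⟩
  rw [show n + 1 + 2 = n + 3 by ring, show 2 * (n + 1) + 2 = 2 * n + 4 by ring]
  have hlucas := fib_add_two_add_fib n
  have hid := fib_add_three_mul_fib_add_two_add_fib n
  have hψ := abs_lt.mp (abs_goldenConj_pow_lt_one (n := n + 1) (by omega))
  rcases Nat.even_or_odd n with hn | hn
  · have hrL : r ≤ Nat.fib (n + 2) + Nat.fib n := by
      have : (r : ℝ) < (Nat.fib (n + 2) + Nat.fib n : ℕ) + 1 := by linarith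
      exact_mod_cast Nat.lt_add_one_iff.mp (by exact_mod_cast this)
    rw [hn.neg_one_pow] at hid
    have hid' : Nat.fib (n + 3) * (Nat.fib (n + 2) + Nat.fib n) + 1 = Nat.fib (2 * n + 4) := by
      exact_mod_cast eq_sub_iff_add_eq.mp hid
    nlinarith [Nat.mul_le_mul_left (Nat.fib (n + 3)) hrL]
  · have hrL : r + 1 ≤ Nat.fib (n + 2) + Nat.fib n := by
      have : (r : ℝ) < (Nat.fib (n + 2) + Nat.fib n : ℕ) := by
        linarith [(Nat.even_add_one.mpr (Nat.not_even_iff_odd.mpr hn)).pow_pos goldenConj_ne_zero]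
      exact_mod_cast this
    rw [hn.neg_one_pow, sub_neg_eq_add] at hid
    have hid' : Nat.fib (n + 3) * (Nat.fib (n + 2) + Nat.fib n) = Nat.fib (2 * n + 4) + 1 := by
      exact_mod_cast hid
    have hfib : 2 ≤ Nat.fib (n + 3) := by
      obtain ⟨m, rfl⟩ := hn
      exact (show 2 ≤ Nat.fib 4 by decide).trans (Nat.fib_mono (by omega))
    nlinarith [Nat.mul_le_mul_left (Nat.fib (n + 3)) hrL]

theorem stmt_7_general (r h s t : ℕ) (hr : 0 < r) (hh : 0 < h)
    (hrh : (r : ℝ) < goldenphi ^ h) (ht : t ≤ r - 1) :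
    ∃ u v : ℕ, u = hofG v ∧ u ≡ s [MOD r] ∧ v ≡ t [MOD r] ∧
      v ≤ Nat.fib (2 * h + 2) - 2 := by
  change (r : ℝ) < φ ^ h at hrh
  have hrL : (r : ℝ) * φ⁻¹ ^ h ≤ 1 := by
    rw [inv_pow, ← div_eq_mul_inv, div_le_one (by positivity)]
    exact hrh.le
  obtain ⟨k, hk, hhit⟩ :=
    exists_lt_fib_rotationHits_inv_goldenRatio h ((s - (t + 1) * φ⁻¹) / r)
  obtain ⟨m, hm⟩ := hhit.exists_floor_eq hr hrL
  have hu : 0 ≤ (s : ℤ) + r * m := hm ▸ Int.floor_nonneg.mpr (by positivity)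
  refine ⟨((s : ℤ) + r * m).toNat, t + k * r, ?_, ?_, Nat.add_mul_mod_self_right t k r, ?_⟩
  · rw [hofG, div_eq_mul_inv]
    exact congrArg Int.toNat hm.symm
  · rw [← Int.natCast_modEq_iff, Int.toNat_of_nonneg hu]
    exact Int.add_mul_emod_self_left _ _ _
  · have hbudget := mul_fib_add_two_add_one_le_fib hh hrh
    have hkr : (k + 1) * r ≤ Nat.fib (h + 2) * r := Nat.mul_le_mul_right r hk
    rw [mul_comm r] at hbudget
    rw [add_mul, one_mul] at hkr
    omega

theorem stmt_7 (r h s t : ℕ) (hr : 0 < r) (hh : 0 < h)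
    (hrh : (r : ℝ) < goldenphi ^ h) (hs : s ≤ r - 1) (ht : t ≤ r - 1) :
    ∃ u v : ℕ, u = hofG v ∧ u ≡ s [MOD r] ∧ v ≡ t [MOD r] ∧
      v ≤ Nat.fib (2 * h + 2) - 2 :=
  stmt_7_general r h s t hr hh hrh ht
end

section
/- Let v be a positive integer with Zeckendorf representation β = β_1…β_L. If β_1 = 1 then the fractional part of v/φ lies in the open interval (φ^{−2}, 1 − φ^{−3}); if β_1 = 0 then the fractional part of v/φ lies in (0, φ^{−2}) ∪ (1 − φ^{−3}, 1). -/
lemma zk_step (L a : ℕ) (β : ℕ → ℕ) (u : ℝ) (ha : a ≤ L) :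
    (∑ i ∈ Finset.Icc a L, (β i : ℝ) * ((-1)^i * u^(i+1)))
      = (β a : ℝ) * ((-1)^a * u^(a+1))
        + ∑ i ∈ Finset.Icc (a+1) L, (β i : ℝ) * ((-1)^i * u^(i+1)) := by
  rw [Finset.Icc_add_one_left_eq_Ioc, ← Finset.Ioc_insert_left ha, Finset.sum_insert (by simp)]

lemma zk_bound (L : ℕ) (β : ℕ → ℕ) (hbit : ∀ i, β i = 0 ∨ β i = 1)
    (hnc : ∀ i, 1 ≤ i → i < L → ¬(β i = 1 ∧ β (i + 1) = 1))
    (u : ℝ) (hu0 : 0 < u) (hu1 : u < 1) (huu : u + u ^ 2 = 1)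
    (T : ℕ → ℝ)
    (hT : ∀ a, T a = ∑ i ∈ Finset.Icc a L, (β i : ℝ) * ((-1)^i * u^(i+1))) :
    ∀ n, ∀ a, 1 ≤ a → L < a + n →
      ((Even a → -u^(a+1) < T a ∧ T a < u^a)
      ∧ (Odd a → -u^a < T a ∧ T a < u^(a+1))
      ∧ ((∃ i ∈ Finset.Icc a L, β i = 1) → T a ≠ 0)) := by
  have hstep2 : ∀ a : ℕ, u ^ (a+1) + u ^ (a+2) = u ^ a := by
    intro a
    have h : u ^ (a+1) + u ^ (a+2) = u ^ a * (u + u ^ 2) := by ring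
    rw [h, huu, mul_one]
  have hdrop : ∀ a : ℕ, u ^ (a+2) < u ^ a := by
    intro a
    have hpa : 0 < u ^ a := pow_pos hu0 a
    have h : u ^ (a+2) = u ^ a * u ^ 2 := by ring
    nlinarith
  have hzero : ∀ a : ℕ, L < a →
      ((Even a → -u^(a+1) < T a ∧ T a < u^a)
      ∧ (Odd a → -u^a < T a ∧ T a < u^(a+1))
      ∧ ((∃ i ∈ Finset.Icc a L, β i = 1) → T a ≠ 0)) := by
    intro a hal
    have hempty : Finset.Icc a L = ∅ := Finset.Icc_eq_empty (by omega)
    have hT0 : T a = 0 := by rw [hT, hempty]; simp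
    refine ⟨fun _ => ?_, fun _ => ?_, ?_⟩
    · rw [hT0]; exact ⟨neg_lt_zero.mpr (pow_pos hu0 _), pow_pos hu0 a⟩
    · rw [hT0]; exact ⟨neg_lt_zero.mpr (pow_pos hu0 _), pow_pos hu0 (a+1)⟩
    · rintro ⟨i, hi, _⟩; rw [hempty] at hi; simp at hi
  intro n
  induction n with
  | zero =>
      intro a _ haL
      exact hzero a (by omega)
  | succ n ih =>
      intro a ha haL
      by_cases hal : L < a
      · exact hzero a hal
      · push_neg at hal
        have hsplit : T a = (β a : ℝ) * ((-1)^a * u^(a+1)) + T (a+1) := by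
          rw [hT a, hT (a+1)]; exact zk_step L a β u hal
        rcases hbit a with h0 | h1
        · -- β a = 0 : T a = T (a+1)
          have hTa : T a = T (a+1) := by rw [hsplit, h0]; push_cast; ring
          have IH := ih (a+1) (by omega) (by omega)
          refine ⟨fun hpar => ?_, fun hpar => ?_, ?_⟩
          · obtain ⟨hlo, hhi⟩ := IH.2.1 (Even.add_one hpar)
            rw [hTa]
            constructor
            · linarith
            · have := hdrop a; linarith
          · obtain ⟨hlo, hhi⟩ := IH.1 (Odd.add_one hpar)
            rw [hTa]
            constructor
            · have := hdrop (a+1); linarith [hdrop a]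
            · linarith
          · rintro ⟨i, hi, hbi⟩
            rw [hTa]
            refine IH.2.2 ⟨i, ?_, hbi⟩
            simp only [Finset.mem_Icc] at hi ⊢
            have : i ≠ a := by rintro rfl; omega
            omega
        · -- β a = 1
          have hT12 : T (a+1) = T (a+2) := by
            by_cases h : a + 1 ≤ L
            · have hb : β (a+1) = 0 := by
                rcases hbit (a+1) with h' | h'
                · exact h'
                · exact absurd ⟨h1, h'⟩ (hnc a ha (by omega))
              have := zk_step L (a+1) β u h
              rw [hT (a+1), hT (a+2), this, hb]
              push_cast; ring
            · have h1e : Finset.Icc (a+1) L = ∅ := Finset.Icc_eq_empty (by omega)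
              have h2e : Finset.Icc (a+2) L = ∅ := Finset.Icc_eq_empty (by omega)
              rw [hT (a+1), hT (a+2), h1e, h2e]
          have IH := ih (a+2) (by omega) (by omega)
          rcases Nat.even_or_odd a with hpar | hpar
          · -- a even
            have hpar2 : Even (a+2) := by
              obtain ⟨k, hk⟩ := hpar; exact ⟨k+1, by omega⟩
            obtain ⟨hlo, hhi⟩ := IH.1 hpar2
            have hTa : T a = u^(a+1) + T (a+2) := by
              rw [hsplit, h1, hT12, hpar.neg_one_pow]; push_cast; ring
            have hpos : 0 < T a := by
              rw [hTa]; have := hdrop (a+1); linarith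
            refine ⟨fun _ => ?_, fun h => absurd hpar (Nat.not_even_iff_odd.mpr h), fun _ => ne_of_gt hpos⟩
            constructor
            · have : 0 < u^(a+1) := pow_pos hu0 (a+1); linarith
            · rw [hTa]; have := hstep2 a; linarith
          · -- a odd
            have hpar2 : Odd (a+2) := by
              obtain ⟨k, hk⟩ := hpar; exact ⟨k+1, by omega⟩
            obtain ⟨hlo, hhi⟩ := IH.2.1 hpar2
            have hTa : T a = -u^(a+1) + T (a+2) := by
              rw [hsplit, h1, hT12, hpar.neg_one_pow]; push_cast; ring
            have hneg : T a < 0 := by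
              rw [hTa]; have := hdrop (a+1); linarith
            refine ⟨fun h => absurd h (Nat.not_even_iff_odd.mpr hpar), fun _ => ?_, fun _ => ne_of_lt hneg⟩
            constructor
            · rw [hTa]; have := hstep2 a; linarith
            · have : 0 < u^(a+1) := pow_pos hu0 (a+1); linarith

lemma fract_of_neg (x : ℝ) (h1 : -1 < x) (h2 : x < 0) : Int.fract x = x + 1 := by
  have hfloor : ⌊x⌋ = -1 := by
    rw [Int.floor_eq_iff]
    constructor <;> push_cast <;> linarith
  rw [Int.fract, hfloor]
  push_cast; ring

set_option maxHeartbeats 1000000 in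
theorem stmt_15 (v L : ℕ) (β : ℕ → ℕ) (hv_pos : 0 < v) (hL : 0 < L)
    (hbit : ∀ i, β i = 0 ∨ β i = 1) (hlast : β L = 1)
    (hnoconsec : ∀ i, 1 ≤ i → i < L → ¬(β i = 1 ∧ β (i + 1) = 1))
    (hv : v = ∑ i ∈ Finset.Icc 1 L, β i * Nat.fib (i + 1)) :
    (β 1 = 1 →
      Int.fract ((v : ℝ) / goldenphi) ∈
        Set.Ioo ((goldenphi ^ 2)⁻¹) (1 - (goldenphi ^ 3)⁻¹)) ∧
    (β 1 = 0 →
      Int.fract ((v : ℝ) / goldenphi) ∈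
        Set.Ioo (0 : ℝ) ((goldenphi ^ 2)⁻¹) ∪
        Set.Ioo (1 - (goldenphi ^ 3)⁻¹) 1) := by
  have hs5 : Real.sqrt 5 ^ 2 = 5 := Real.sq_sqrt (by norm_num)
  have hs5pos : 1 < Real.sqrt 5 := by nlinarith [Real.sqrt_nonneg 5]
  have hphi1 : 1 < goldenphi := by unfold goldenphi; linarith
  have hphi0 : 0 < goldenphi := by linarith
  have hphi2 : goldenphi ^ 2 = goldenphi + 1 := by
    unfold goldenphi; field_simp; nlinarith
  set u : ℝ := goldenphi⁻¹ with hu_def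
  have hu0 : 0 < u := inv_pos.mpr hphi0
  have hu1 : u < 1 := by
    rw [hu_def, inv_lt_one_iff₀]; right; exact hphi1
  have huu : u + u ^ 2 = 1 := by
    rw [hu_def]
    field_simp
    nlinarith
  -- Fibonacci identity
  have hfib : ∀ i : ℕ, (Nat.fib (i+1) : ℝ) * u = (Nat.fib i : ℝ) + (-1)^i * u^(i+1) := by
    have key : ∀ i : ℕ, (Nat.fib (i+1) : ℝ) * u - (Nat.fib i : ℝ) = (-1)^i * u^(i+1) := by
      intro i
      induction i with
      | zero => simp
      | succ i ihh =>
          have hfib2 : (Nat.fib (i+2) : ℝ) = (Nat.fib (i+1) : ℝ) + (Nat.fib i : ℝ) := by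
            rw [Nat.fib_add_two]; push_cast; ring
          have h1mu : 1 - u = u ^ 2 := by linarith
          calc (Nat.fib (i+1+1) : ℝ) * u - (Nat.fib (i+1) : ℝ)
              = (Nat.fib i : ℝ) * u - (Nat.fib (i+1) : ℝ) * (1 - u) := by rw [hfib2]; ring
            _ = (Nat.fib i : ℝ) * u - (Nat.fib (i+1) : ℝ) * u ^ 2 := by rw [h1mu]
            _ = -u * ((Nat.fib (i+1) : ℝ) * u - (Nat.fib i : ℝ)) := by ring
            _ = -u * ((-1)^i * u^(i+1)) := by rw [ihh]
            _ = (-1)^(i+1) * u^(i+1+1) := by ring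
    intro i
    linarith [key i]
  -- decompose v * u
  set T : ℕ → ℝ := fun a => ∑ i ∈ Finset.Icc a L, (β i : ℝ) * ((-1)^i * u^(i+1)) with hT_def
  have hTd : ∀ a, T a = ∑ i ∈ Finset.Icc a L, (β i : ℝ) * ((-1)^i * u^(i+1)) := fun a => rfl
  set N : ℕ := ∑ i ∈ Finset.Icc 1 L, β i * Nat.fib i with hN_def
  have hvu : (v : ℝ) * u = (N : ℝ) + T 1 := by
    rw [hv, hN_def, hT_def]
    push_cast
    rw [Finset.sum_mul, ← Finset.sum_add_distrib]
    apply Finset.sum_congr rfl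
    intro i _
    have := hfib i
    calc (β i : ℝ) * (Nat.fib (i+1) : ℝ) * u = (β i : ℝ) * ((Nat.fib (i+1) : ℝ) * u) := by ring
      _ = (β i : ℝ) * ((Nat.fib i : ℝ) + (-1)^i * u^(i+1)) := by rw [this]
      _ = (β i : ℝ) * (Nat.fib i : ℝ) + (β i : ℝ) * ((-1)^i * u^(i+1)) := by ring
  have hdiv : (v : ℝ) / goldenphi = (N : ℝ) + T 1 := by
    rw [div_eq_mul_inv, ← hu_def, hvu]
  have hfract : Int.fract ((v : ℝ) / goldenphi) = Int.fract (T 1) := by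
    rw [hdiv]
    have : ((N : ℤ) : ℝ) = (N : ℝ) := by push_cast; ring
    rw [← this, Int.fract_intCast_add]
  -- bounds machinery
  have hB := zk_bound L β hbit hnoconsec u hu0 hu1 huu T hTd
  -- power identities
  have hphi2inv : (goldenphi ^ 2)⁻¹ = u ^ 2 := by rw [hu_def, inv_pow]
  have hphi3inv : (goldenphi ^ 3)⁻¹ = u ^ 3 := by rw [hu_def, inv_pow]
  have hu2 : u ^ 2 = 1 - u := by linarith
  have hu3 : u ^ 3 = u * u ^ 2 := by ring
  have hu4 : u ^ 4 = u ^ 2 * u ^ 2 := by ring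
  constructor
  · -- β 1 = 1
    intro hb1
    have hsplit1 : T 1 = (β 1 : ℝ) * ((-1)^1 * u^(1+1)) + T 2 :=
      zk_step L 1 β u hL
    have hT23 : T 2 = T 3 := by
      by_cases h : 2 ≤ L
      · have hb2 : β 2 = 0 := by
          rcases hbit 2 with h' | h'
          · exact h'
          · exact absurd ⟨hb1, h'⟩ (hnoconsec 1 le_rfl (by omega))
        have := zk_step L 2 β u h
        rw [hTd 2, hTd 3] at *
        rw [this, hb2]; push_cast; ring
      · have h1e : Finset.Icc 2 L = ∅ := Finset.Icc_eq_empty (by omega)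
        have h2e : Finset.Icc 3 L = ∅ := Finset.Icc_eq_empty (by omega)
        rw [hTd 2, hTd 3, h1e, h2e]
    have hT1 : T 1 = -u^2 + T 3 := by
      rw [hsplit1, hb1, hT23]; push_cast; ring
    have hB3 := (hB (L+1) 3 (by omega) (by omega)).2.1 (by decide)
    obtain ⟨hlo, hhi⟩ := hB3
    norm_num at hlo hhi
    have hu2lt1 : u ^ 2 < 1 := by nlinarith
    have hu4lt2 : u ^ 4 < u ^ 2 := by nlinarith [pow_pos hu0 2]
    -- T 3 ∈ (-u^3, u^4), so T 1 ∈ (-u, -u^3)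
    have hT1lo : -1 < T 1 := by
      rw [hT1]
      nlinarith [pow_pos hu0 3]
    have hT1hi : T 1 < 0 := by
      rw [hT1]; linarith
    have hfr : Int.fract (T 1) = T 1 + 1 := fract_of_neg _ hT1lo hT1hi
    rw [hfract, hfr, Set.mem_Ioo, hphi2inv, hphi3inv]
    constructor
    · rw [hT1]; nlinarith
    · rw [hT1]; nlinarith
  · -- β 1 = 0
    intro hb1
    have hL2 : 2 ≤ L := by
      rcases Nat.lt_or_ge L 2 with h | h
      · interval_cases L
        · exact absurd hlast (by rw [hb1]; omega)
      · exact h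
    have hsplit1 : T 1 = (β 1 : ℝ) * ((-1)^1 * u^(1+1)) + T 2 :=
      zk_step L 1 β u hL
    have hT12 : T 1 = T 2 := by rw [hsplit1, hb1]; push_cast; ring
    have hB2 := hB (L+1) 2 (by omega) (by omega)
    obtain ⟨hlo, hhi⟩ := hB2.1 (by decide)
    norm_num at hlo
    have hu3lt1 : u ^ 3 < 1 := by nlinarith [pow_pos hu0 2]
    have hne : T 2 ≠ 0 := hB2.2.2 ⟨L, by simp [Finset.mem_Icc]; omega, hlast⟩
    rw [hfract, hT12]
    rcases lt_or_gt_of_ne hne with hneg | hpos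
    · -- T 2 < 0, fract = T 2 + 1 ∈ (1 - u^3, 1)
      right
      have hT2lo : -1 < T 2 := by linarith
      have hfr : Int.fract (T 2) = T 2 + 1 := fract_of_neg _ hT2lo hneg
      rw [hfr, Set.mem_Ioo, hphi3inv]
      exact ⟨by linarith, by linarith⟩
    · -- T 2 > 0, fract = T 2 ∈ (0, u^2)
      left
      have hT2hi : T 2 < 1 := by nlinarith [pow_pos hu0 2]
      have hfr : Int.fract (T 2) = T 2 := Int.fract_eq_self.mpr ⟨le_of_lt hpos, hT2hi⟩
      rw [hfr, Set.mem_Ioo, hphi2inv]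
      exact ⟨hpos, hhi⟩
end

section
/- Let H be a group, a an element of H, and β = β_1…β_ℓ a bit string (each β_i ∈ {0,1}). Define c_0 = 1, d_0 = a, e_0 = 1 and, for 1 ≤ i ≤ ℓ, c_i = d_{i−1}, d_i = c_{i−1}·d_{i−1}, and e_i = e_{i−1}·d_i^{β_i}. Then for every i with 0 ≤ i ≤ ℓ, c_i = a^{F_i}, d_i = a^{F_{i+1}}, and e_i = a^{Σ_{j=1}^{i} β_j F_{j+1}}; in particular e_ℓ = a^{FibSum(β)}, i.e., Algorithm FibExp computes a^k for k = FibSum(β). -/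
theorem stmt_17 {H : Type*} [Group H] (a : H) (ℓ : ℕ) (β : ℕ → ℕ)
    (hbit : ∀ i, β i = 0 ∨ β i = 1)
    (c d e : ℕ → H)
    (hc0 : c 0 = 1) (hd0 : d 0 = a) (he0 : e 0 = 1)
    (hc : ∀ i, 1 ≤ i → i ≤ ℓ → c i = d (i - 1))
    (hd : ∀ i, 1 ≤ i → i ≤ ℓ → d i = c (i - 1) * d (i - 1))
    (he : ∀ i, 1 ≤ i → i ≤ ℓ → e i = e (i - 1) * (d i) ^ (β i)) :
    ∀ i, i ≤ ℓ →
      c i = a ^ Nat.fib i ∧ d i = a ^ Nat.fib (i + 1) ∧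
      e i = a ^ (∑ j ∈ Finset.Icc 1 i, β j * Nat.fib (j + 1)) := by
  intro i
  induction i with
  | zero => intro _; simp [hc0, hd0, he0]
  | succ n ih =>
    intro h
    obtain ⟨ihc, ihd, ihe⟩ := ih (Nat.le_of_succ_le h)
    have h1 : 1 ≤ n + 1 := Nat.le_add_left 1 n
    have hcs : c (n+1) = a ^ Nat.fib (n+1) := by
      rw [hc (n+1) h1 h]; simpa using ihd
    have hds : d (n+1) = a ^ Nat.fib (n+2) := by
      rw [hd (n+1) h1 h]; simp only [Nat.add_sub_cancel]
      rw [ihc, ihd, ← pow_add, Nat.fib_add_two]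
    refine ⟨hcs, hds, ?_⟩
    rw [he (n+1) h1 h]
    simp only [Nat.add_sub_cancel]
    rw [ihe, hds, ← pow_mul, ← pow_add,
      Finset.sum_Icc_succ_top h1]
    congr 1; ring
end
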